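/- Let c = 2 and let α, β⁺, β⁻: {−1,+1}² → (0,∞) be arbitrary positive penalty functions. Then there exists a probability distribution P on {−1,+1}² such that some global minimizer over ℝ² of the conditional surrogate risk f ↦ Σ_{y∈{−1,+1}²} P(y)·L_u(f,y) with hinge base loss ℓ(z) = max{0, 1−z} is not a global minimizer over ℝ² of the conditional general partial ranking risk f ↦ Σ_{y∈{−1,+1}²} P(y)·L_gpr(f,y). -/

import Mathlib

open scoped BigOperators

/-- The set of positive-label indices of `y ∈ {-1,+1}^c` (encoded as `Fin c → Bool`). -/
def Sp {c : ℕ} (y : Fin c → Bool) : Finset (Fin c) :=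
  Finset.univ.filter (fun j => y j = true)

/-- The set of negative-label indices. -/
def Sm {c : ℕ} (y : Fin c → Bool) : Finset (Fin c) :=
  Finset.univ.filter (fun j => y j = false)

/-- The sign value of a Boolean label: `true ↦ +1`, `false ↦ -1`. -/
def toSign (b : Bool) : ℝ := if b then 1 else -1

/-- The general reweighted univariate surrogate loss `L_u`. -/
noncomputable def Lu {c : ℕ} (βp βm : (Fin c → Bool) → ℝ) (ℓ : ℝ → ℝ)
    (v : Fin c → ℝ) (y : Fin c → Bool) : ℝ :=
  ∑ j, (if y j then βp y else βm y) * ℓ (toSign (y j) * v j)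

/-- The general partial ranking loss `L_gpr`. -/
noncomputable def Lgpr {c : ℕ} (α : (Fin c → Bool) → ℝ) (v : Fin c → ℝ)
    (y : Fin c → Bool) : ℝ :=
  α y * ∑ p ∈ Sp y, ∑ q ∈ Sm y,
    ((if v p < v q then (1 : ℝ) else 0) + (1 / 2) * (if v p = v q then (1 : ℝ) else 0))

/-- The conditional surrogate risk. -/
noncomputable def riskU {c : ℕ} (βp βm : (Fin c → Bool) → ℝ) (ℓ : ℝ → ℝ)
    (P : (Fin c → Bool) → ℝ) (f : Fin c → ℝ) : ℝ :=
  ∑ y, P y * Lu βp βm ℓ f y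

/-- The conditional general partial ranking risk. -/
noncomputable def riskGpr {c : ℕ} (α : (Fin c → Bool) → ℝ)
    (P : (Fin c → Bool) → ℝ) (f : Fin c → ℝ) : ℝ :=
  ∑ y, P y * Lgpr α f y

/-! Put almost all the mass on `y = (+1,+1)`, mass `a` on `(+1,-1)` and mass `b` on `(-1,+1)`
with `a α(+1,-1) < b α(-1,+1)`. The hinge surrogate risk splits over coordinates into
`A_j ℓ(f_j) + B_j ℓ(-f_j)`, where `A_j`, `B_j` are the `β`-weighted masses of labels with
`y_j = +1`, resp. `y_j = -1`; when `B_j ≤ A_j` each term is minimized at `f_j = 1`, and for small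
`a`, `b` this holds because the mass on `(+1,+1)` dominates. So `f = (1,1)` minimizes the surrogate
risk, but it ties the two labels and pays half of both pairwise losses, while ranking label `1`
above label `0` pays only `a α(+1,-1)`. -/

open Topology

noncomputable def hinge (z : ℝ) : ℝ := max 0 (1 - z)

section Univariate

variable {c : ℕ}

noncomputable def posWeight (P βp : (Fin c → Bool) → ℝ) (j : Fin c) : ℝ :=
  ∑ y, if y j then P y * βp y else 0

noncomputable def negWeight (P βm : (Fin c → Bool) → ℝ) (j : Fin c) : ℝ :=
  ∑ y, if y j then 0 else P y * βm y

theorem riskU_eq_sum_weights (βp βm : (Fin c → Bool) → ℝ) (ℓ : ℝ → ℝ)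
    (P : (Fin c → Bool) → ℝ) (f : Fin c → ℝ) :
    riskU βp βm ℓ P f =
      ∑ j, (posWeight P βp j * ℓ (f j) + negWeight P βm j * ℓ (-f j)) := by
  simp only [riskU, Lu, Finset.mul_sum, posWeight, negWeight, Finset.sum_mul,
    ← Finset.sum_add_distrib]
  rw [Finset.sum_comm]
  refine Finset.sum_congr rfl fun j _ => Finset.sum_congr rfl fun y _ => ?_
  cases y j <;> simp [toSign] <;> ring

theorem hinge_weighted_le {A B : ℝ} (hB : 0 ≤ B) (hBA : B ≤ A) (t : ℝ) :
    A * hinge 1 + B * hinge (-1) ≤ A * hinge t + B * hinge (-t) := by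
  have hsum : 2 ≤ hinge t + hinge (-t) := by
    have := le_max_right 0 (1 - t)
    have := le_max_right 0 (1 - -t)
    simp only [hinge]
    linarith
  have hpos : 0 ≤ (A - B) * hinge t := mul_nonneg (sub_nonneg.2 hBA) (le_max_left _ _)
  have hone : hinge 1 = 0 := by norm_num [hinge]
  have hnegone : hinge (-1) = 2 := by norm_num [hinge]
  rw [hone, hnegone]
  linarith [mul_le_mul_of_nonneg_left hsum hB]

theorem riskU_hinge_one_le {βp βm P : (Fin c → Bool) → ℝ}
    (hw : ∀ j, 0 ≤ negWeight P βm j ∧ negWeight P βm j ≤ posWeight P βp j) (g : Fin c → ℝ) :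
    riskU βp βm hinge P (fun _ => 1) ≤ riskU βp βm hinge P g := by
  rw [riskU_eq_sum_weights, riskU_eq_sum_weights]
  exact Finset.sum_le_sum fun j _ => hinge_weighted_le (hw j).1 (hw j).2 (g j)

end Univariate

theorem sum_fin_two_bool (F : (Fin 2 → Bool) → ℝ) :
    ∑ y, F y = F ![true, true] + F ![true, false] + F ![false, true] + F ![false, false] := by
  rw [← (finTwoArrowEquiv Bool).symm.sum_comp, Fintype.sum_prod_type]
  simp
  ring

noncomputable def pairRankLoss (a b : ℝ) : ℝ :=
  (if a < b then 1 else 0) + 1 / 2 * (if a = b then 1 else 0)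

theorem riskGpr_fin_two (α P : (Fin 2 → Bool) → ℝ) (v : Fin 2 → ℝ) :
    riskGpr α P v = P ![true, false] * α ![true, false] * pairRankLoss (v 0) (v 1)
      + P ![false, true] * α ![false, true] * pairRankLoss (v 1) (v 0) := by
  rw [riskGpr, sum_fin_two_bool]
  simp [Lgpr, Sp, Sm, Finset.sum_filter, Fin.sum_univ_two, pairRankLoss]
  ring

theorem riskGpr_lt_of_tie (α P : (Fin 2 → Bool) → ℝ)
    (h : P ![true, false] * α ![true, false] < P ![false, true] * α ![false, true]) :
    riskGpr α P ![0, 1] < riskGpr α P (fun _ => 1) := by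
  simp only [riskGpr_fin_two, pairRankLoss]
  norm_num
  linarith

noncomputable def twoLabelDist (a b : ℝ) : (Fin 2 → Bool) → ℝ := fun y =>
  if y 0 then (if y 1 then 1 - a - b else a) else (if y 1 then b else 0)

theorem sum_twoLabelDist (a b : ℝ) : ∑ y, twoLabelDist a b y = 1 := by
  simp [sum_fin_two_bool, twoLabelDist]
  ring

theorem eventually_twoLabelDist_weights {βp βm : (Fin 2 → Bool) → ℝ}
    (hβp : 0 < βp ![true, true]) (hβm : ∀ y, 0 ≤ βm y) {u v : ℝ} (hu : 0 ≤ u) (hv : 0 ≤ v) :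
    ∀ᶠ t in 𝓝[>] 0, (∀ y, 0 ≤ twoLabelDist (t * u) (t * v) y) ∧
      ∀ j, 0 ≤ negWeight (twoLabelDist (t * u) (t * v)) βm j ∧
        negWeight (twoLabelDist (t * u) (t * v)) βm j ≤
          posWeight (twoLabelDist (t * u) (t * v)) βp j := by
  have hTT_ev : ∀ᶠ t in 𝓝 (0 : ℝ), 0 < 1 - t * u - t * v :=
    ContinuousAt.eventually_lt (by fun_prop) (by fun_prop) (by simp)
  have hw₀_ev : ∀ᶠ t in 𝓝 (0 : ℝ), t * v * βm ![false, true] <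
      (1 - t * u - t * v) * βp ![true, true] + t * u * βp ![true, false] :=
    ContinuousAt.eventually_lt (by fun_prop) (by fun_prop) (by simpa using hβp)
  have hw₁_ev : ∀ᶠ t in 𝓝 (0 : ℝ), t * u * βm ![true, false] <
      (1 - t * u - t * v) * βp ![true, true] + t * v * βp ![false, true] :=
    ContinuousAt.eventually_lt (by fun_prop) (by fun_prop) (by simpa using hβp)
  filter_upwards [nhdsWithin_le_nhds (hTT_ev.and (hw₀_ev.and hw₁_ev)), self_mem_nhdsWithin]
    with t ⟨hTT, hw₀, hw₁⟩ (ht : 0 < t)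
  have htu : 0 ≤ t * u := mul_nonneg ht.le hu
  have htv : 0 ≤ t * v := mul_nonneg ht.le hv
  refine ⟨fun y => ?_, Fin.forall_fin_two.2 ⟨?_, ?_⟩⟩
  · unfold twoLabelDist
    split_ifs <;> linarith
  · simpa [negWeight, posWeight, sum_fin_two_bool, twoLabelDist] using
      ⟨mul_nonneg htv (hβm _), hw₀.le⟩
  · simpa [negWeight, posWeight, sum_fin_two_bool, twoLabelDist] using
      ⟨mul_nonneg htu (hβm _), hw₁.le⟩

theorem stmt17 (α βp βm : (Fin 2 → Bool) → ℝ)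
    (hα : ∀ y, 0 < α y) (hβp : ∀ y, 0 < βp y) (hβm : ∀ y, 0 < βm y) :
    ∃ P : (Fin 2 → Bool) → ℝ, (∀ y, 0 ≤ P y) ∧ (∑ y, P y) = 1 ∧
      ∃ f : Fin 2 → ℝ,
        (∀ g : Fin 2 → ℝ,
            riskU βp βm (fun z => max 0 (1 - z)) P f ≤
              riskU βp βm (fun z => max 0 (1 - z)) P g) ∧
          ¬ (∀ g : Fin 2 → ℝ, riskGpr α P f ≤ riskGpr α P g) := by
  have hTF := hα ![true, false]
  have hFT := hα ![false, true]
  obtain ⟨t, ⟨hP, hw⟩, ht⟩ := ((eventually_twoLabelDist_weights (hβp _) (fun y => (hβm y).le)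
    hFT.le (mul_nonneg zero_le_two hTF.le)).and self_mem_nhdsWithin).exists
  refine ⟨_, hP, sum_twoLabelDist _ _, fun _ => 1, riskU_hinge_one_le hw, fun hmin => ?_⟩
  refine (hmin ![0, 1]).not_gt (riskGpr_lt_of_tie α _ ?_)
  simp only [twoLabelDist]
  norm_num
  nlinarith [mul_pos (mul_pos ht hTF) hFT]
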